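/- arXiv:1409.2067 — 3 statements merged into one kernel-verified Lean document; each statement's English description precedes it below -/
import Mathlib

section
/- Let p be a prime. The number of orbits of the diagonal left action of SL(2, ZMod p) on pairs of column vectors in (ZMod p)^2, i.e., on ((ZMod p)^2)^2 with simultaneous matrix multiplication on both vectors, is 2p + 1. -/
/-- The orbit of a pair of column vectors in `(ZMod p)²` under the diagonal left action
of `SL(2, ZMod p)`. -/
def pairOrbit (p : ℕ) (v : (Fin 2 → ZMod p) × (Fin 2 → ZMod p)) :
    Set ((Fin 2 → ZMod p) × (Fin 2 → ZMod p)) :=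
  { w | ∃ S : Matrix.SpecialLinearGroup (Fin 2) (ZMod p),
      ((S : Matrix (Fin 2) (Fin 2) (ZMod p)).mulVec v.1,
        (S : Matrix (Fin 2) (Fin 2) (ZMod p)).mulVec v.2) = w }

/-!
The orbit of a pair `(v, w)` under `SL(2, K)`, `K` a field, is determined as follows. If `v = 0`
there are two orbits, according to whether `w = 0` (`SL(2, K)` is transitive on nonzero vectors).
If `v ≠ 0` and `d = det (v, w) ≠ 0`, the matrix with columns `v, w / d` lies in `SL(2, K)` and
maps `(e₁, d e₂)` to `(v, w)`, so `d ∈ Kˣ` is a complete invariant. If `v ≠ 0` and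
`det (v, w) = 0`, then `w = a v` and `(v, w)` lies in the orbit of `(e₁, a e₁)`, so `a ∈ K` is a
complete invariant. The orbits thus correspond to `K ⊕ Kˣ ⊕ Bool`, which has
`p + (p - 1) + 2 = 2p + 1` elements for `K = ZMod p`.
-/

open Matrix MulAction

namespace Matrix.SpecialLinearGroup

variable {K : Type*} [Field K]

def pairDet (v w : Fin 2 → K) : K := v 0 * w 1 - v 1 * w 0

lemma pairDet_smul (S : SpecialLinearGroup (Fin 2) K) (v w : Fin 2 → K) :
    pairDet (S • v) (S • w) = pairDet v w := by
  have hS : S 0 0 * S 1 1 - S 0 1 * S 1 0 = 1 := by rw [← det_fin_two]; exact S.2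
  simp only [pairDet, SpecialLinearGroup.smul_def, smul_eq_mulVec, mulVec, dotProduct,
    Fin.sum_univ_two]
  linear_combination (v 0 * w 1 - v 1 * w 0) * hS

def ofCols (v w : Fin 2 → K) (h : pairDet v w = 1) : SpecialLinearGroup (Fin 2) K :=
  ⟨!![v 0, w 0; v 1, w 1], by rw [det_fin_two_of]; unfold pairDet at h; linear_combination h⟩

lemma ofCols_smul {v w : Fin 2 → K} (h : pairDet v w = 1) (u : Fin 2 → K) :
    ofCols v w h • u = u 0 • v + u 1 • w := by
  change !![v 0, w 0; v 1, w 1] *ᵥ u = _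
  ext i
  fin_cases i <;> simp [mulVec, dotProduct, Fin.sum_univ_two] <;> ring

lemma apply_one_ne_zero {v : Fin 2 → K} (hv : v ≠ 0) (h0 : v 0 = 0) : v 1 ≠ 0 :=
  fun h1 => hv (by ext i; fin_cases i <;> assumption)

lemma exists_pairDet_eq_one {v : Fin 2 → K} (hv : v ≠ 0) : ∃ w, pairDet v w = 1 := by
  by_cases h0 : v 0 = 0
  · have h1 := apply_one_ne_zero hv h0
    exact ⟨![-(v 1)⁻¹, 0], by simp [pairDet, h1]⟩
  · exact ⟨![0, (v 0)⁻¹], by simp [pairDet, h0]⟩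

lemma exists_smul_eq_of_ne_zero {v : Fin 2 → K} (hv : v ≠ 0) :
    ∃ S : SpecialLinearGroup (Fin 2) K, S • ![1, 0] = v := by
  obtain ⟨w, hw⟩ := exists_pairDet_eq_one hv
  exact ⟨ofCols v w hw, by simp [ofCols_smul]⟩

variable [DecidableEq K]

def ratio (v w : Fin 2 → K) : K := if v 0 = 0 then w 1 / v 1 else w 0 / v 0

lemma ratio_smul {v : Fin 2 → K} (hv : v ≠ 0) (a : K) : ratio v (a • v) = a := by
  by_cases h0 : v 0 = 0
  · have h1 := apply_one_ne_zero hv h0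
    simp [ratio, h0, h1]
  · simp [ratio, h0]

lemma eq_ratio_smul {v w : Fin 2 → K} (hv : v ≠ 0) (hd : pairDet v w = 0) :
    w = ratio v w • v := by
  unfold pairDet at hd
  by_cases h0 : v 0 = 0
  · have h1 := apply_one_ne_zero hv h0
    have hw0 : w 0 = 0 := by simpa [h0, h1] using hd
    ext i; fin_cases i <;> simp [ratio, h0, h1, hw0]
  · ext i
    fin_cases i <;> simp [ratio, h0]
    field_simp
    linear_combination hd

def pairInvariant (x : (Fin 2 → K) × (Fin 2 → K)) : K ⊕ Kˣ ⊕ Bool :=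
  if x.1 = 0 then .inr (.inr (decide (x.2 = 0)))
  else if hd : pairDet x.1 x.2 = 0 then .inl (ratio x.1 x.2)
  else .inr (.inl (Units.mk0 _ hd))

lemma pairInvariant_smul (S : SpecialLinearGroup (Fin 2) K) (x : (Fin 2 → K) × (Fin 2 → K)) :
    pairInvariant (S • x) = pairInvariant x := by
  obtain ⟨v, w⟩ := x
  simp only [pairInvariant, Prod.smul_mk, smul_eq_zero_iff_eq, pairDet_smul]
  split_ifs with hv hd
  · rfl
  · rw [eq_ratio_smul hv hd, smul_comm, ratio_smul ((smul_eq_zero_iff_eq S).not.mpr hv),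
      ratio_smul hv]
  · rfl

def pairRep : K ⊕ Kˣ ⊕ Bool → (Fin 2 → K) × (Fin 2 → K)
  | .inl a => (![1, 0], ![a, 0])
  | .inr (.inl d) => (![1, 0], ![0, d])
  | .inr (.inr true) => (0, 0)
  | .inr (.inr false) => (0, ![1, 0])

lemma pairInvariant_pairRep (i : K ⊕ Kˣ ⊕ Bool) : pairInvariant (pairRep i) = i := by
  have he : (![1, 0] : Fin 2 → K) ≠ 0 := fun h => by simpa using congrFun h 0
  rcases i with a | d | _ | _
  · simp [pairInvariant, pairRep, pairDet, ratio, he]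
  · simp [pairInvariant, pairRep, pairDet, he]
  · simp [pairInvariant, pairRep, he]
  · simp [pairInvariant, pairRep]

lemma mem_orbit_pairRep_pairInvariant (x : (Fin 2 → K) × (Fin 2 → K)) :
    x ∈ orbit (SpecialLinearGroup (Fin 2) K) (pairRep (pairInvariant x)) := by
  obtain ⟨v, w⟩ := x
  by_cases hv : v = 0
  · subst hv
    by_cases hw : w = 0
    · subst hw
      exact ⟨1, by simp [pairInvariant, pairRep]⟩
    · obtain ⟨S, hS⟩ := exists_smul_eq_of_ne_zero hw
      exact ⟨S, by simp [pairInvariant, pairRep, hw, hS]⟩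
  by_cases hd : pairDet v w = 0
  · obtain ⟨S, hS⟩ := exists_smul_eq_of_ne_zero hv
    refine ⟨S, ?_⟩
    have ha : (![ratio v w, 0] : Fin 2 → K) = ratio v w • ![1, 0] := by
      ext i; fin_cases i <;> simp
    simp only [pairInvariant, pairRep, hv, hd, if_false, dif_pos, Prod.smul_mk, hS, ha,
      smul_comm S, ← eq_ratio_smul hv hd]
  · have hdet : pairDet v ((pairDet v w)⁻¹ • w) = 1 := by
      simp only [pairDet, Pi.smul_apply, smul_eq_mul] at hd ⊢
      field_simp
    refine ⟨ofCols v _ hdet, ?_⟩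
    simp [pairInvariant, pairRep, hv, hd, ofCols_smul, smul_smul]

def orbitEquiv :
    orbitRel.Quotient (SpecialLinearGroup (Fin 2) K) ((Fin 2 → K) × (Fin 2 → K)) ≃
      K ⊕ Kˣ ⊕ Bool where
  toFun := Quotient.lift pairInvariant fun x y hxy => by
    obtain ⟨S, rfl⟩ := orbitRel_apply.mp hxy
    exact pairInvariant_smul S y
  invFun i := ⟦pairRep i⟧
  left_inv := Quotient.ind fun x =>
    Quotient.sound (orbitRel_apply.mpr (mem_orbit_symm.mp (mem_orbit_pairRep_pairInvariant x)))
  right_inv := pairInvariant_pairRep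

end Matrix.SpecialLinearGroup

lemma MulAction.card_orbits_eq_card_quotient (G α : Type*) [Group G] [MulAction G α] :
    Nat.card {O : Set α // ∃ a, O = orbit G a} = Nat.card (orbitRel.Quotient G α) := by
  refine (Nat.card_congr ((Equiv.ofInjective _ orbitRel.Quotient.orbit_injective).trans
    (Equiv.subtypeEquivRight fun O => ?_))).symm
  simp only [Set.mem_range, Quotient.exists, orbitRel.Quotient.orbit_mk, eq_comm]

theorem card_orbits_pairs (p : ℕ) (hp : p.Prime) :
    Nat.card { O : Set ((Fin 2 → ZMod p) × (Fin 2 → ZMod p)) // ∃ v, O = pairOrbit p v } =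
      2 * p + 1 := by
  have : Fact p.Prime := ⟨hp⟩
  have hunits : Nat.card (ZMod p)ˣ = p - 1 := by rw [Nat.card_eq_fintype_card, ZMod.card_units]
  calc Nat.card { O // ∃ v, O = pairOrbit p v }
      = Nat.card (orbitRel.Quotient (SpecialLinearGroup (Fin 2) (ZMod p))
          ((Fin 2 → ZMod p) × (Fin 2 → ZMod p))) := card_orbits_eq_card_quotient _ _
    _ = Nat.card (ZMod p ⊕ (ZMod p)ˣ ⊕ Bool) := Nat.card_congr SpecialLinearGroup.orbitEquiv
    _ = p + (p - 1 + 2) := by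
      rw [Nat.card_sum, Nat.card_sum, Nat.card_zmod, hunits, Nat.card_eq_fintype_card (α := Bool),
        Fintype.card_bool]
    _ = 2 * p + 1 := by have := hp.two_le; omega
end

section
/- Let p be a prime and n ≥ 1. The number of orbits of the diagonal left action of SL(2, ZMod p) on n-tuples of column vectors in (ZMod p)^2 (equivalently, on 2×n matrices over ZMod p by left multiplication) equals (p^(2n-1) + p^(n+1) - p^(n-1) + p^2 - p - 1)/(p^2 - 1). -/
/-- The orbit of a `2 × n` matrix over `ZMod p` under left multiplication by `SL(2, ZMod p)`. -/
def slOrbit (p n : ℕ) (M : Matrix (Fin 2) (Fin n) (ZMod p)) :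
    Set (Matrix (Fin 2) (Fin n) (ZMod p)) :=
  { N | ∃ S : Matrix.SpecialLinearGroup (Fin 2) (ZMod p),
      (S : Matrix (Fin 2) (Fin 2) (ZMod p)) * M = N }

/-- The number of orbits of `SL(2, ZMod p)` on `2 × n` matrices over `ZMod p`. -/
noncomputable def r (p n : ℕ) : ℕ :=
  Nat.card { O : Set (Matrix (Fin 2) (Fin n) (ZMod p)) // ∃ M, O = slOrbit p n M }

/-!
A matrix `S ∈ SL(2, F)` fixes exactly the `2 × n` matrices whose columns lie in `ker (S - 1)`.
Since `det (S - 1) = 2 - tr S`, this kernel has dimension 2 for `S = 1`, dimension 1 for the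
`q² - 1` elements `S ≠ 1` of trace 2, and dimension 0 otherwise. Both `|SL(2, F)| = q³ - q` and the
number `q²` of elements of trace 2 come from counting the solutions of `b c = k`: there are `2q - 1`
for `k = 0` and `q - 1` otherwise. Burnside's lemma then gives
`r · (q³ - q) = q²ⁿ + (q² - 1) qⁿ + (q³ - q - q²)`, and for `q = p`, `n ≥ 1` the right-hand side is
`p` times the numerator of the formula.
-/

open Finset Matrix Module MulAction

theorem sum_ite_eq_ite_ite {α M : Type*} [Fintype α] [DecidableEq α] [AddCommMonoid M]
    (P : α → Prop) [DecidablePred P] {a : α} (ha : P a) (A B C : M) :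
    ∑ x, (if x = a then A else if P x then B else C) =
      A + (#{x | P x} - 1) • B + (Fintype.card α - #{x | P x}) • C := by
  rw [← sum_filter_add_sum_filter_not univ P, ← add_sum_erase _ _ ((mem_filter_univ a).mpr ha),
    if_pos rfl]
  have hP : ∀ x ∈ ({x | P x} : Finset α).erase a,
      (if x = a then A else if P x then B else C) = B := fun x hx => by
    rw [if_neg (ne_of_mem_erase hx), if_pos ((mem_filter_univ x).mp (mem_of_mem_erase hx))]
  have hnP : ∀ x ∈ ({x | ¬ P x} : Finset α),
      (if x = a then A else if P x then B else C) = C := fun x hx => by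
    have hx : ¬ P x := (mem_filter_univ x).mp hx
    rw [if_neg (fun h : x = a => hx (h ▸ ha)), if_neg hx]
  rw [sum_congr rfl hP, sum_congr rfl hnP, sum_const, sum_const,
    card_erase_of_mem ((mem_filter_univ a).mpr ha), filter_not,
    card_sdiff_of_subset (filter_subset _ _), card_univ, add_assoc]

section FiniteField

variable {F : Type*} [Field F] [Fintype F] [DecidableEq F]

local notation "q" => Fintype.card F

theorem card_filter_mul_eq (k : F) :
    #{x : F × F | x.1 * x.2 = k} = if k = 0 then 2 * q - 1 else q - 1 := by
  split_ifs with hk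
  · subst hk
    have hunion : ({x : F × F | x.1 * x.2 = 0} : Finset (F × F)) =
        ({0} ×ˢ univ) ∪ (univ ×ˢ {0}) := by
      ext ⟨a, b⟩
      simp [eq_comm]
    have hinter : ({0} ×ˢ univ) ∩ (univ ×ˢ {0}) = ({(0, 0)} : Finset (F × F)) := by
      ext ⟨a, b⟩
      simp [eq_comm, and_comm]
    have := card_union_add_card_inter ({0} ×ˢ univ) (univ ×ˢ {0} : Finset (F × F))
    rw [← hunion, hinter, card_singleton, card_product, card_product, card_singleton,
      card_univ] at this
    omega
  · rw [← Fintype.card_units, ← Fintype.card_subtype]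
    exact Fintype.card_congr
      { toFun x := Units.mk0 x.1.1 fun h => hk (by simp [← x.2, h])
        invFun u := ⟨(u, u⁻¹ * k), by simp⟩
        left_inv x := by
          obtain ⟨⟨a, b⟩, rfl⟩ := x
          have ha : a ≠ 0 := fun h => hk (by simp [h])
          ext <;> simp [ha]
        right_inv u := by ext; rfl }

theorem card_filter_prod_mul_eq {α : Type*} [Fintype α] (g : α → F) :
    #{t : α × (F × F) | t.2.1 * t.2.2 = g t.1} =
      #{a | g a = 0} * (2 * q - 1) + #{a | g a ≠ 0} * (q - 1) := by
  rw [card_filter, Fintype.sum_prod_type]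
  simp only [← card_filter, card_filter_mul_eq]
  rw [sum_ite, sum_const, sum_const, smul_eq_mul, smul_eq_mul]

end FiniteField

namespace Matrix

theorem finrank_ker_mulVecLin_fin_two {K : Type*} [Field K] [DecidableEq K]
    (A : Matrix (Fin 2) (Fin 2) K) :
    finrank K (LinearMap.ker A.mulVecLin) = if A = 0 then 2 else if A.det = 0 then 1 else 0 := by
  have hle : finrank K (LinearMap.ker A.mulVecLin) ≤ 2 := by
    simpa using Submodule.finrank_le (LinearMap.ker A.mulVecLin)
  have htop : finrank K (LinearMap.ker A.mulVecLin) = 2 ↔ A = 0 := by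
    rw [← Submodule.eq_top_iff_finrank_eq.trans (Eq.congr_right (finrank_fin_fun K)),
      LinearMap.ker_eq_top, ← toLin'_apply', LinearEquiv.map_eq_zero_iff]
  have hbot : finrank K (LinearMap.ker A.mulVecLin) = 0 ↔ A.det ≠ 0 := by
    rw [Submodule.finrank_eq_zero, ker_mulVecLin_eq_bot_iff, ne_eq, ← exists_mulVec_eq_zero_iff]
    push Not
    exact forall_congr' fun v => not_imp_not.symm
  split_ifs with h0 hdet
  · exact htop.mpr h0
  · have := htop.not.mpr h0
    have := hbot.not.mpr (not_not.mpr hdet)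
    omega
  · exact hbot.mpr hdet

theorem det_sub_one_fin_two {R : Type*} [CommRing R] (A : Matrix (Fin 2) (Fin 2) R) :
    (A - 1).det = A.det - A.trace + 1 := by
  simp [det_fin_two, trace_fin_two]
  ring

namespace SpecialLinearGroup

section Action

variable {m ι R : Type*} [Fintype m] [DecidableEq m] [CommRing R]

instance : MulAction (SpecialLinearGroup m R) (Matrix m ι R) where
  smul S M := (S : Matrix m m R) * M
  one_smul := Matrix.one_mul
  mul_smul _ _ _ := Matrix.mul_assoc _ _ _

def fixedByEquiv (S : SpecialLinearGroup m R) :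
    fixedBy (Matrix m ι R) S ≃ (ι → {v : m → R // S *ᵥ v = v}) :=
  (Equiv.subtypeEquiv (transposeAddEquiv m ι R).toEquiv fun _ =>
    transpose_inj.symm.trans funext_iff).trans Equiv.subtypePiEquivPi

theorem card_fixedBy [Finite ι] (S : SpecialLinearGroup m R) :
    Nat.card (fixedBy (Matrix m ι R) S) = Nat.card {v : m → R // S *ᵥ v = v} ^ Nat.card ι := by
  rw [Nat.card_congr (fixedByEquiv S), Nat.card_fun]

end Action

variable {F : Type*} [Field F] [Fintype F] [DecidableEq F]

local notation "q" => Fintype.card F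

/-- Coordinates `((a, d), (b, c))` of `!![a, b; c, d]`, so that `det = 1` reads `b c = a d - 1`. -/
def finTwoEquiv :
    SpecialLinearGroup (Fin 2) F ≃
      {t : (F × F) × (F × F) // t.2.1 * t.2.2 = t.1.1 * t.1.2 - 1} where
  toFun S := ⟨((S 0 0, S 1 1), (S 0 1, S 1 0)), by
    have hdet := S.det_coe
    rw [det_fin_two] at hdet
    linear_combination -hdet⟩
  invFun t := ⟨!![t.1.1.1, t.1.2.1; t.1.2.2, t.1.1.2], by simp [det_fin_two, t.2]⟩
  left_inv S := by ext i j; fin_cases i <;> fin_cases j <;> rfl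
  right_inv _ := rfl

def traceEqTwoEquiv :
    {S : SpecialLinearGroup (Fin 2) F // trace (S : Matrix (Fin 2) (Fin 2) F) = 2} ≃
      {t : F × (F × F) // t.2.1 * t.2.2 = t.1 * (2 - t.1) - 1} where
  toFun S := ⟨(S.1 0 0, (S.1 0 1, S.1 1 0)), by
    have hdet := S.1.det_coe
    have htr := S.2
    rw [det_fin_two] at hdet
    rw [trace_fin_two] at htr
    linear_combination -hdet + S.1 0 0 * htr⟩
  invFun t := ⟨⟨!![t.1.1, t.1.2.1; t.1.2.2, 2 - t.1.1], by simp [det_fin_two, t.2]⟩,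
    by simp [trace_fin_two]⟩
  left_inv S := by
    have htr := S.2
    rw [trace_fin_two] at htr
    ext i j
    fin_cases i <;> fin_cases j <;> simp
    linear_combination -htr
  right_inv _ := rfl

theorem card_fin_two : Fintype.card (SpecialLinearGroup (Fin 2) F) = q ^ 3 - q := by
  rw [Fintype.card_congr finTwoEquiv, Fintype.card_subtype,
    card_filter_prod_mul_eq fun a : F × F => a.1 * a.2 - 1]
  have hzero : #{a : F × F | a.1 * a.2 - 1 = 0} = q - 1 := by
    simpa [sub_eq_zero] using card_filter_mul_eq (1 : F)
  have htotal := card_filter_add_card_filter_not (s := (univ : Finset (F × F)))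
    fun a => a.1 * a.2 - 1 = 0
  rw [card_univ, Fintype.card_prod] at htotal
  have hq : 1 ≤ q := Fintype.card_pos
  have hq3 : q ≤ q ^ 3 := Nat.le_self_pow (by norm_num) q
  zify [hq, hq3, show 1 ≤ 2 * q by omega] at htotal hzero ⊢
  linear_combination (q - 1 : ℤ) * htotal + (q : ℤ) * hzero

theorem card_trace_eq_two :
    Fintype.card {S : SpecialLinearGroup (Fin 2) F // trace (S : Matrix (Fin 2) (Fin 2) F) = 2} =
      q ^ 2 := by
  rw [Fintype.card_congr traceEqTwoEquiv, Fintype.card_subtype,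
    card_filter_prod_mul_eq fun a : F => a * (2 - a) - 1]
  have hzero : ({a : F | a * (2 - a) - 1 = 0} : Finset F) = {1} := by
    ext a
    rw [mem_filter_univ, mem_singleton, show a * (2 - a) - 1 = -(a - 1) ^ 2 by ring, neg_eq_zero,
      pow_eq_zero_iff two_ne_zero, sub_eq_zero]
  have htotal := card_filter_add_card_filter_not (s := (univ : Finset F))
    fun a => a * (2 - a) - 1 = 0
  rw [card_univ, hzero, card_singleton] at htotal
  rw [hzero, card_singleton]
  have hq : 1 ≤ q := Fintype.card_pos
  zify [hq, show 1 ≤ 2 * q by omega] at htotal ⊢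
  linear_combination (q - 1 : ℤ) * htotal

theorem card_fixed_mulVec_fin_two (S : SpecialLinearGroup (Fin 2) F) :
    Nat.card {v : Fin 2 → F // S *ᵥ v = v} =
      q ^ (if S = 1 then 2 else if trace (S : Matrix (Fin 2) (Fin 2) F) = 2 then 1 else 0) := by
  have hker : {v : Fin 2 → F // S *ᵥ v = v} ≃
      LinearMap.ker ((S : Matrix (Fin 2) (Fin 2) F) - 1).mulVecLin :=
    Equiv.subtypeEquivRight fun v => by
      rw [LinearMap.mem_ker, mulVecLin_apply, sub_mulVec, one_mulVec, sub_eq_zero]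
  rw [Nat.card_congr hker, Module.natCard_eq_pow_finrank (K := F), Nat.card_eq_fintype_card,
    finrank_ker_mulVecLin_fin_two, det_sub_one_fin_two, S.det_coe]
  have hone : (S : Matrix (Fin 2) (Fin 2) F) - 1 = 0 ↔ S = 1 :=
    ⟨fun h => Subtype.ext (sub_eq_zero.mp h), fun h => by simp [h]⟩
  have htrace : 1 - trace (S : Matrix (Fin 2) (Fin 2) F) + 1 = 0 ↔
      trace (S : Matrix (Fin 2) (Fin 2) F) = 2 :=
    ⟨fun h => by linear_combination -h, fun h => by linear_combination -h⟩
  exact congrArg _ (if_congr hone rfl (if_congr htrace rfl rfl))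

theorem card_orbits_mul_card_fin_two (ι : Type*) [Fintype ι] :
    Nat.card (orbitRel.Quotient (SpecialLinearGroup (Fin 2) F) (Matrix (Fin 2) ι F)) *
        (q ^ 3 - q) =
      q ^ (2 * Fintype.card ι) + (q ^ 2 - 1) * q ^ Fintype.card ι + (q ^ 3 - q - q ^ 2) := by
  classical
  set k := Fintype.card ι
  have hfix : ∀ S : SpecialLinearGroup (Fin 2) F,
      Fintype.card (fixedBy (Matrix (Fin 2) ι F) S) =
        if S = 1 then q ^ (2 * k) else if trace (S : Matrix (Fin 2) (Fin 2) F) = 2 then q ^ k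
        else 1 := by
    intro S
    rw [Fintype.card_eq_nat_card, card_fixedBy, card_fixed_mulVec_fin_two, Nat.card_eq_fintype_card]
    split_ifs <;> ring
  have htrace_one : trace ((1 : SpecialLinearGroup (Fin 2) F) : Matrix (Fin 2) (Fin 2) F) = 2 := by
    rw [coe_one, trace_one, Fintype.card_fin, Nat.cast_ofNat]
  calc _ = Fintype.card (orbitRel.Quotient (SpecialLinearGroup (Fin 2) F) (Matrix (Fin 2) ι F)) *
        Fintype.card (SpecialLinearGroup (Fin 2) F) := by
        rw [Nat.card_eq_fintype_card, card_fin_two]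
    _ = ∑ S : SpecialLinearGroup (Fin 2) F, Fintype.card (fixedBy (Matrix (Fin 2) ι F) S) :=
        (sum_card_fixedBy_eq_card_orbits_mul_card_group _ _).symm
    _ = _ := by
        rw [sum_congr rfl fun S _ => hfix S,
          sum_ite_eq_ite_ite (fun S : SpecialLinearGroup (Fin 2) F =>
            trace (S : Matrix (Fin 2) (Fin 2) F) = 2) htrace_one,
          ← Fintype.card_subtype, card_trace_eq_two, card_fin_two, smul_eq_mul, smul_eq_mul, mul_one]

end SpecialLinearGroup

end Matrix

theorem slOrbit_eq_orbit (p n : ℕ) (M : Matrix (Fin 2) (Fin n) (ZMod p)) :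
    slOrbit p n M = orbit (SpecialLinearGroup (Fin 2) (ZMod p)) M :=
  rfl

theorem r_eq_card_orbitRel_quotient (p n : ℕ) :
    r p n = Nat.card (orbitRel.Quotient (SpecialLinearGroup (Fin 2) (ZMod p))
      (Matrix (Fin 2) (Fin n) (ZMod p))) := by
  rw [r, ← Nat.card_range_of_injective orbitRel.Quotient.orbit_injective]
  refine Nat.card_congr (Equiv.subtypeEquivRight fun O => ?_)
  constructor
  · rintro ⟨M, rfl⟩
    exact ⟨Quotient.mk'' M, (orbitRel.Quotient.orbit_mk M).trans (slOrbit_eq_orbit p n M).symm⟩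
  · rintro ⟨x, rfl⟩
    induction x using Quotient.inductionOn' with
    | h M => exact ⟨M, (orbitRel.Quotient.orbit_mk M).trans (slOrbit_eq_orbit p n M).symm⟩

theorem card_orbits_formula (p n : ℕ) (hp : p.Prime) (hn : 1 ≤ n) :
    r p n =
      (p ^ (2 * n - 1) + p ^ (n + 1) - p ^ (n - 1) + p ^ 2 - p - 1) / (p ^ 2 - 1) := by
  have := Fact.mk hp
  obtain ⟨m, rfl⟩ := Nat.exists_eq_add_of_le' hn
  have burnside := SpecialLinearGroup.card_orbits_mul_card_fin_two (F := ZMod p) (Fin (m + 1))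
  rw [ZMod.card, Fintype.card_fin, ← r_eq_card_orbitRel_quotient] at burnside
  have hp2 := hp.two_le
  have h1 : p ^ m ≤ p ^ (2 * m + 1) := Nat.pow_le_pow_right (by omega) (by omega)
  have h2 : p + 1 ≤ p ^ 2 := by nlinarith
  have h3 : p ^ 2 + p ≤ p ^ 3 := by nlinarith
  have hnum : p ^ (2 * (m + 1) - 1) + p ^ (m + 1 + 1) - p ^ (m + 1 - 1) + p ^ 2 - p - 1 =
      r p (m + 1) * (p ^ 2 - 1) := by
    rw [show 2 * (m + 1) - 1 = 2 * m + 1 by omega, Nat.add_sub_cancel]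
    zify [show p ≤ p ^ 3 by omega, show p ^ 2 ≤ p ^ 3 - p by omega, show 1 ≤ p ^ 2 by omega,
      show p ^ m ≤ p ^ (2 * m + 1) + p ^ (m + 1 + 1) by omega,
      show p ≤ p ^ (2 * m + 1) + p ^ (m + 1 + 1) - p ^ m + p ^ 2 by omega,
      show 1 ≤ p ^ (2 * m + 1) + p ^ (m + 1 + 1) - p ^ m + p ^ 2 - p by omega] at burnside ⊢
    refine mul_left_cancel₀ (show (p : ℤ) ≠ 0 by positivity) ?_
    linear_combination -burnside
  rw [hnum, Nat.mul_div_cancel _ (by omega)]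
end

section
/- For every n ≥ 1, the number of words a_1…a_n over the alphabet {0,1,2,3} satisfying a_i ≤ max{a_j : j < i} + 1 for all i (first letter at most 1) equals (2^n + 1)(2^(n-1) + 1)/3. -/
/-- The condition defining the language `W₂ⁿ`: each letter is at most one more than the
maximum of all previous letters (so the first letter is at most `1`). -/
def IsWord {n : ℕ} (a : Fin n → Fin 4) : Prop :=
  ∀ i : Fin n,
    (a i : ℕ) ≤ 1 + (Finset.univ.filter (fun j => j < i)).sup (fun j => (a j : ℕ))

instance {n : ℕ} : DecidablePred (IsWord (n := n)) := fun a => by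
  unfold IsWord; infer_instance

def wmax {n : ℕ} (a : Fin n → Fin 4) : ℕ := Finset.univ.sup fun i => (a i : ℕ)

lemma wmax_def {n : ℕ} (a : Fin n → Fin 4) :
    wmax a = Finset.univ.sup fun i => (a i : ℕ) := rfl

def WF (n m : ℕ) : Finset (Fin n → Fin 4) :=
  Finset.univ.filter fun a => IsWord a ∧ wmax a = m

lemma sup_castSucc {n : ℕ} (a : Fin (n+1) → Fin 4) (i : Fin n) :
    (Finset.univ.filter (fun j => j < i.castSucc)).sup (fun j => (a j : ℕ)) =
    (Finset.univ.filter (fun j => j < i)).sup (fun j => (Fin.init a j : ℕ)) := by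
  apply le_antisymm
  · apply Finset.sup_le
    intro j hj
    simp only [Finset.mem_filter, Finset.mem_univ, true_and, Fin.lt_def,
      Fin.coe_castSucc] at hj
    have hjn : (j : ℕ) < n := hj.trans i.isLt
    have he : a j = Fin.init a ⟨(j : ℕ), hjn⟩ := rfl
    rw [he]
    refine Finset.le_sup (f := fun j => (Fin.init a j : ℕ)) ?_
    simp only [Finset.mem_filter, Finset.mem_univ, true_and, Fin.lt_def]
    exact hj
  · apply Finset.sup_le
    intro j hj
    simp only [Finset.mem_filter, Finset.mem_univ, true_and] at hj
    have he : (Fin.init a j : ℕ) = a j.castSucc := rfl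
    rw [he]
    refine Finset.le_sup (f := fun j : Fin (n+1) => (a j : ℕ)) ?_
    simp only [Finset.mem_filter, Finset.mem_univ, true_and, Fin.lt_def, Fin.coe_castSucc]
    exact hj

lemma sup_last {n : ℕ} (a : Fin (n+1) → Fin 4) :
    (Finset.univ.filter (fun j => j < Fin.last n)).sup (fun j => (a j : ℕ)) =
    wmax (Fin.init a) := by
  rw [wmax_def]
  apply le_antisymm
  · apply Finset.sup_le
    intro j hj
    simp only [Finset.mem_filter, Finset.mem_univ, true_and, Fin.lt_def,
      Fin.val_last] at hj
    have he : a j = Fin.init a ⟨(j : ℕ), hj⟩ := rfl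
    rw [he]
    exact Finset.le_sup (f := fun j => (Fin.init a j : ℕ)) (Finset.mem_univ _)
  · apply Finset.sup_le
    intro j _
    have he : (Fin.init a j : ℕ) = a j.castSucc := rfl
    rw [he]
    refine Finset.le_sup (f := fun j : Fin (n+1) => (a j : ℕ)) ?_
    simp only [Finset.mem_filter, Finset.mem_univ, true_and, Fin.lt_def, Fin.coe_castSucc,
      Fin.val_last]
    exact j.isLt

lemma wmax_succ {n : ℕ} (a : Fin (n+1) → Fin 4) :
    wmax a = max (wmax (Fin.init a)) (a (Fin.last n) : ℕ) := by
  apply le_antisymm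
  · rw [wmax_def]
    apply Finset.sup_le
    intro j _
    induction j using Fin.lastCases with
    | last => exact le_max_right _ _
    | cast i =>
      refine le_trans ?_ (le_max_left _ _)
      rw [wmax_def]
      exact Finset.le_sup (f := fun j => (Fin.init a j : ℕ)) (Finset.mem_univ i)
  · apply max_le
    · rw [wmax_def, wmax_def]
      apply Finset.sup_le
      intro j _
      exact Finset.le_sup (f := fun j : Fin (n+1) => (a j : ℕ)) (Finset.mem_univ j.castSucc)
    · rw [wmax_def]
      exact Finset.le_sup (f := fun j : Fin (n+1) => (a j : ℕ)) (Finset.mem_univ _)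

lemma isWord_succ_iff {n : ℕ} (a : Fin (n+1) → Fin 4) :
    IsWord a ↔ IsWord (Fin.init a) ∧ (a (Fin.last n) : ℕ) ≤ 1 + wmax (Fin.init a) := by
  constructor
  · intro h
    refine ⟨fun i => ?_, ?_⟩
    · have hi := h i.castSucc
      rw [sup_castSucc] at hi
      exact hi
    · have hl := h (Fin.last n)
      rwa [sup_last] at hl
  · rintro ⟨h1, h2⟩ i
    induction i using Fin.lastCases with
    | last => rwa [sup_last]
    | cast i' =>
      rw [sup_castSucc]
      exact h1 i'

example : (WF 1 0).card = 1 ∧ (WF 1 1).card = 1 ∧ (WF 1 2).card = 0 ∧ (WF 1 3).card = 0 := by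
  decide

lemma mem_WF_iff {n m : ℕ} (a : Fin n → Fin 4) :
    a ∈ WF n m ↔ IsWord a ∧ wmax a = m := by
  simp [WF]

lemma card_WF_succ (n p : ℕ) (hp : p ≤ 2) :
    (WF (n+1) (p+1)).card = (p+2) * (WF n (p+1)).card + (WF n p).card := by
  have key : (WF (n+1) (p+1)).card =
      ((WF n (p+1) ×ˢ Finset.univ.filter (fun x : Fin 4 => (x : ℕ) ≤ p+1)) ∪
       (WF n p ×ˢ Finset.univ.filter (fun x : Fin 4 => (x : ℕ) = p+1))).card := by
    apply Finset.card_bij (fun a _ => (Fin.init a, a (Fin.last n)))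
    · intro a ha
      rw [mem_WF_iff, isWord_succ_iff, wmax_succ] at ha
      obtain ⟨⟨h1, h2⟩, h3⟩ := ha
      simp only [Finset.mem_union, Finset.mem_product, mem_WF_iff, Finset.mem_filter,
        Finset.mem_univ, true_and]
      by_cases hb : wmax (Fin.init a) = p + 1
      · exact Or.inl ⟨⟨h1, hb⟩, by omega⟩
      · exact Or.inr ⟨⟨h1, by omega⟩, by omega⟩
    · intro a ha a' ha' h
      have h1 : Fin.init a = Fin.init a' := congrArg Prod.fst h
      have h2 : a (Fin.last n) = a' (Fin.last n) := congrArg Prod.snd h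
      rw [← Fin.snoc_init_self a, ← Fin.snoc_init_self a', h1, h2]
    · intro pr hpr
      refine ⟨Fin.snoc pr.1 pr.2, ?_, ?_⟩
      · simp only [Finset.mem_union, Finset.mem_product, mem_WF_iff, Finset.mem_filter,
          Finset.mem_univ, true_and] at hpr
        rw [mem_WF_iff, isWord_succ_iff, wmax_succ, Fin.init_snoc, Fin.snoc_last]
        rcases hpr with ⟨⟨h1, h2⟩, h3⟩ | ⟨⟨h1, h2⟩, h3⟩
        · exact ⟨⟨h1, by omega⟩, by omega⟩
        · exact ⟨⟨h1, by omega⟩, by omega⟩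
      · rw [Fin.init_snoc, Fin.snoc_last]
  rw [key, Finset.card_union_of_disjoint, Finset.card_product, Finset.card_product]
  · have c1 : (Finset.univ.filter (fun x : Fin 4 => (x : ℕ) ≤ p+1)).card = p + 2 := by
      interval_cases p <;> decide
    have c2 : (Finset.univ.filter (fun x : Fin 4 => (x : ℕ) = p+1)).card = 1 := by
      interval_cases p <;> decide
    rw [c1, c2, mul_one, mul_comm]
  · rw [Finset.disjoint_left]
    rintro ⟨b, x⟩ hb hb'
    simp only [Finset.mem_product, mem_WF_iff] at hb hb'
    omega

lemma card_WF_succ_zero (n : ℕ) : (WF (n+1) 0).card = (WF n 0).card := by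
  apply Finset.card_bij (fun a _ => Fin.init a)
  · intro a ha
    rw [mem_WF_iff, isWord_succ_iff, wmax_succ] at ha
    obtain ⟨⟨h1, _⟩, h3⟩ := ha
    exact (mem_WF_iff _).2 ⟨h1, by omega⟩
  · intro a ha a' ha' h
    rw [mem_WF_iff, isWord_succ_iff, wmax_succ] at ha ha'
    have h2 : a (Fin.last n) = a' (Fin.last n) := by
      have e1 : (a (Fin.last n) : ℕ) = 0 := by omega
      have e2 : (a' (Fin.last n) : ℕ) = 0 := by omega
      exact Fin.ext (e1.trans e2.symm)
    rw [← Fin.snoc_init_self a, ← Fin.snoc_init_self a', h, h2]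
  · intro b hb
    rw [mem_WF_iff] at hb
    refine ⟨Fin.snoc b 0, ?_, Fin.init_snoc ..⟩
    rw [mem_WF_iff, isWord_succ_iff, wmax_succ, Fin.init_snoc, Fin.snoc_last]
    refine ⟨⟨hb.1, ?_⟩, ?_⟩ <;> simp [hb.2]

lemma wmax_le_three {n : ℕ} (a : Fin n → Fin 4) : wmax a ≤ 3 :=
  Finset.sup_le fun i _ => Nat.lt_succ_iff.mp (a i).isLt

lemma total (n : ℕ) :
    (Finset.univ.filter (fun a : Fin n → Fin 4 => IsWord a)).card =
    (WF n 0).card + (WF n 1).card + (WF n 2).card + (WF n 3).card := by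
  rw [Finset.card_eq_sum_card_fiberwise
    (f := wmax) (t := Finset.range 4)
    (fun a _ => Finset.mem_range.2 (by have := wmax_le_three a; omega))]
  rw [Finset.sum_range_succ, Finset.sum_range_succ, Finset.sum_range_succ,
    Finset.sum_range_one]
  have he : ∀ m, (Finset.univ.filter (fun a : Fin n → Fin 4 => IsWord a)).filter
      (fun a => wmax a = m) = WF n m := by
    intro m
    rw [Finset.filter_filter]
    rfl
  rw [he 0, he 1, he 2, he 3]

lemma quad (k : ℕ) :
    (WF (k+1) 0).card = 1 ∧
    (WF (k+1) 1).card + 1 = 2 ^ (k+1) ∧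
    2 * (WF (k+1) 2).card + 2 * 2 ^ (k+1) = 3 ^ (k+1) + 1 ∧
    6 * (WF (k+1) 3).card + 3 * 3 ^ (k+1) + 1 = 4 ^ (k+1) + 3 * 2 ^ (k+1) := by
  induction k with
  | zero =>
    refine ⟨?_, ?_, ?_, ?_⟩ <;> norm_num <;> decide
  | succ k ih =>
    obtain ⟨h0, h1, h2, h3⟩ := ih
    have r0 := card_WF_succ_zero (k+1)
    have r1 := card_WF_succ (k+1) 0 (by norm_num)
    have r2 := card_WF_succ (k+1) 1 (by norm_num)
    have r3 := card_WF_succ (k+1) 2 (by norm_num)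
    norm_num at r1 r2 r3
    simp only [pow_succ (n := k+1)]
    refine ⟨by rw [r0]; exact h0, ?_, ?_, ?_⟩
    · rw [show k+1+1 = (k+1)+1 from rfl, r1]; omega
    · rw [show k+1+1 = (k+1)+1 from rfl, r2]; omega
    · rw [show k+1+1 = (k+1)+1 from rfl, r3]; omega

theorem word_count_formula (n : ℕ) (hn : 1 ≤ n) :
    Nat.card { a : Fin n → Fin 4 // IsWord a } = (2 ^ n + 1) * (2 ^ (n - 1) + 1) / 3 := by
  obtain ⟨k, rfl⟩ : ∃ k, n = k + 1 := ⟨n - 1, by omega⟩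
  rw [Nat.card_eq_fintype_card, Fintype.card_subtype, total]
  obtain ⟨h0, h1, h2, h3⟩ := quad k
  have h4 : (4:ℕ) ^ (k+1) = 2 ^ (k+1) * 2 ^ (k+1) := by
    rw [show (4:ℕ) = 2 * 2 from rfl, mul_pow]
  have hp : (2:ℕ) ^ (k+1) = 2 ^ k * 2 := pow_succ 2 k
  have h2Y : 2 * ((2 ^ (k+1) + 1) * (2 ^ ((k+1) - 1) + 1)) =
      4 ^ (k+1) + 3 * 2 ^ (k+1) + 2 := by
    rw [Nat.add_sub_cancel, h4, hp]; ring
  omega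
end
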